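/- arXiv:0902.2274 — 3 statements merged into one kernel-verified Lean document; each statement's English description precedes it below -/
import Mathlib

section
/- Fix an integer b ≥ 2 and let 𝒜 be the 2b × 2b matrix over ℚ with rows and columns indexed by pairs (i,R), i ∈ {0, …, b−1}, R ∈ {P,N}, whose entry 𝒜_{(i,R),(j,S)} equals 1 if (i = j and R ≠ S), or (i > j), or (i < j and R = P and S = N), and equals 0 otherwise. Then the characteristic polynomial of 𝒜 equals X^{b−1} · (X − b) · (X + 1)^b. -/
/-- The adjacency matrix `𝒜 = ℰ + 𝒯 + 𝒰` of admissible compositions over `ℚ`,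
with rows and columns indexed by pairs `(i, R)`, `i ∈ Fin b`, `R ∈ {P, N}` (here
`P` is modelled by `true` and `N` by `false`): the entry at `((i,R), (j,S))` is
`1` iff `(i = j ∧ R ≠ S) ∨ i > j ∨ (i < j ∧ R = P ∧ S = N)`, and `0` otherwise. -/
def calA (b : ℕ) : Matrix (Fin b × Bool) (Fin b × Bool) ℚ :=
  fun p q =>
    if (p.1 = q.1 ∧ p.2 ≠ q.2) ∨ q.1 < p.1 ∨
        (p.1 < q.1 ∧ p.2 = true ∧ q.2 = false) then 1 else 0

/-!
The block of `𝒜` from `P`-states to `N`-states consists of ones, so `𝒜 = 𝒜₀ + u vᵀ` with `u`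
the indicator of the `P`-states, `v` that of the `N`-states, and `𝒜₀` strictly lower triangular
once all `P`-states are listed before all `N`-states. Hence `det (1 - t 𝒜₀) = 1`, and the matrix
determinant lemma gives `det (1 - t 𝒜) = 1 - t vᵀ z` where `(1 - t 𝒜₀) z = u`. This system is
solved by `z (i, P) = (1 + t) ^ i` and `z (i, N) = (i + 1) t (1 + t) ^ i`, and summing gives the
reversed characteristic polynomial `(1 - b t) (1 + t) ^ b`; reflecting it in degree `2 b` yields
the claim.
-/

open Matrix Polynomial Finset

namespace Matrix

variable {n R : Type*} [Fintype n] [DecidableEq n] [CommRing R]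

theorem BlockTriangular.det_of_injective {α : Type*} [LinearOrder α] {M : Matrix n n R}
    {b : n → α} (hM : M.BlockTriangular b) (hb : Function.Injective b) :
    M.det = ∏ i, M i i := by
  let : LinearOrder n := LinearOrder.lift' b hb
  exact det_of_isUpperTriangular fun _ _ hij => hM hij

theorem det_sub_vecMulVec_of_mulVec_eq {B : Matrix n n R} {u z : n → R} (hz : B *ᵥ z = u)
    (v : n → R) : (B - vecMulVec u v).det = B.det * (1 - v ⬝ᵥ z) := by
  have hfac : B - vecMulVec u v = B * (1 - vecMulVec z v) := by
    rw [Matrix.mul_sub, Matrix.mul_one, mul_vecMulVec, hz]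
  rw [hfac, det_mul, vecMulVec_eq Unit, det_one_sub_mul_comm, det_unique (1 - _)]
  simp [replicateRow_mul_replicateCol_apply]

theorem charpoly_eq_reflect_charpolyRev [Nontrivial R] (M : Matrix n n R) :
    M.charpoly = M.charpolyRev.reflect (Fintype.card n) := by
  rw [← reverse_charpoly, reverse, charpoly_natDegree_eq_dim, reflect_reflect]

end Matrix

namespace Polynomial

variable {R : Type*} [CommRing R]

theorem reflect_one_add_X_pow (n : ℕ) : ((1 + X : R[X]) ^ n).reflect n = (X + 1) ^ n := by
  induction n with
  | zero => simp
  | succ n ih =>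
    have h1 : (1 + X : R[X]).natDegree ≤ 1 := by compute_degree
    have hn : ((1 + X : R[X]) ^ n).natDegree ≤ n := by simpa using natDegree_pow_le_of_le n h1
    rw [pow_succ, pow_succ, reflect_mul _ _ hn h1, ih, reflect_add, reflect_one, reflect_one_X,
      pow_one]

theorem reflect_one_sub_C_mul_X_mul_one_add_X_pow (c : R) (m n : ℕ) :
    ((1 - C c * X) * (1 + X : R[X]) ^ n).reflect (m + 1 + n) =
      X ^ m * (X - C c) * (X + 1) ^ n := by
  have h1 : (1 - C c * X : R[X]).natDegree ≤ 1 := by compute_degree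
  have hn : ((1 + X : R[X]) ^ n).natDegree ≤ n := by
    simpa using natDegree_pow_le_of_le n (by compute_degree : (1 + X : R[X]).natDegree ≤ 1)
  rw [← one_mul ((1 - C c * X) * _), add_assoc,
    reflect_mul _ _ (natDegree_one.trans_le m.zero_le) (natDegree_mul_le_of_le h1 hn),
    reflect_mul _ _ h1 hn, reflect_one_add_X_pow, reflect_one, reflect_sub, reflect_one,
    reflect_C_mul, reflect_one_X, mul_assoc]
  ring

end Polynomial

section Sums

variable {M : Type*} [AddCommMonoid M]

theorem Fin.sum_ite_val_lt {b m : ℕ} (hm : m ≤ b) (f : ℕ → M) :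
    ∑ j : Fin b, (if (j : ℕ) < m then f j else 0) = ∑ k ∈ range m, f k := by
  rw [Fin.sum_univ_eq_sum_range (fun j => if j < m then f j else 0), ← sum_filter]
  congr 1
  ext k
  simp only [mem_filter, mem_range]
  omega

theorem Fin.sum_ite_lt {b : ℕ} (i : Fin b) (f : ℕ → M) :
    ∑ j : Fin b, (if j < i then f j else 0) = ∑ k ∈ range i, f k :=
  Fin.sum_ite_val_lt i.isLt.le f

theorem Fin.sum_ite_le {b : ℕ} (i : Fin b) (f : ℕ → M) :
    ∑ j : Fin b, (if j ≤ i then f j else 0) = ∑ k ∈ range (i + 1), f k := by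
  rw [← Fin.sum_ite_val_lt i.isLt f]
  exact sum_congr rfl fun j _ => if_congr Nat.lt_succ_iff.symm rfl rfl

theorem mul_sum_range_cast_add_one_mul_mul_one_add_pow {R : Type*} [CommRing R] (x : R) (i : ℕ) :
    x * ∑ k ∈ range i, ((k : R) + 1) * x * (1 + x) ^ k =
      i * x * (1 + x) ^ i - (1 + x) ^ i + 1 := by
  induction i with
  | zero => simp
  | succ i ih =>
    rw [sum_range_succ, mul_add, ih]
    push_cast
    ring

end Sums

def calAStrict (b : ℕ) : Matrix (Fin b × Bool) (Fin b × Bool) ℚ := fun p q =>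
  match p.2, q.2 with
  | true, true => if q.1 < p.1 then 1 else 0
  | true, false => 0
  | false, true => if q.1 ≤ p.1 then 1 else 0
  | false, false => if q.1 < p.1 then 1 else 0

noncomputable def indicatorP (b : ℕ) : Fin b × Bool → ℚ[X] := fun p => if p.2 then 1 else 0

noncomputable def indicatorN (b : ℕ) : Fin b × Bool → ℚ[X] := fun p => if p.2 then 0 else 1

theorem map_calA_eq_add_vecMulVec (b : ℕ) :
    (calA b).map C = (calAStrict b).map C + vecMulVec (indicatorP b) (indicatorN b) := by
  ext ⟨i, _ | _⟩ ⟨j, _ | _⟩ : 1 <;>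
    simp only [calA, calAStrict, indicatorP, indicatorN, map_apply, Matrix.add_apply,
      vecMulVec_apply] <;>
    split_ifs <;> simp_all <;> omega

def strictKey (b : ℕ) (p : Fin b × Bool) : ℕ := if p.2 then p.1 else b + p.1

theorem strictKey_injective (b : ℕ) : Function.Injective (strictKey b) := by
  rintro ⟨i, _ | _⟩ ⟨j, _ | _⟩ h <;>
    simp only [strictKey, ↓reduceIte, Bool.false_eq_true, Bool.true_eq_false, Prod.mk.injEq,
      Fin.ext_iff, and_true, and_false] at h ⊢ <;>
    omega

theorem calAStrict_eq_zero_of_le {b : ℕ} {p q : Fin b × Bool}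
    (h : strictKey b p ≤ strictKey b q) : calAStrict b p q = 0 := by
  rcases p with ⟨i, _ | _⟩ <;> rcases q with ⟨j, _ | _⟩ <;>
    simp only [strictKey, calAStrict, Bool.false_eq_true, ↓reduceIte] at h ⊢ <;>
    split_ifs <;> first | rfl | (exfalso; omega)

theorem det_one_sub_X_smul_calAStrict (b : ℕ) :
    (1 - (X : ℚ[X]) • (calAStrict b).map C).det = 1 := by
  have htri : (1 - (X : ℚ[X]) • (calAStrict b).map C).BlockTriangular
      fun p => OrderDual.toDual (strictKey b p) := by
    intro p q hpq
    have hne : p ≠ q := by rintro rfl; exact lt_irrefl _ hpq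
    simp [one_apply_ne hne, calAStrict_eq_zero_of_le (OrderDual.toDual_lt_toDual.mp hpq).le]
  rw [htri.det_of_injective (OrderDual.toDual.injective.comp (strictKey_injective b))]
  simp [calAStrict_eq_zero_of_le le_rfl]

noncomputable def strictResolvent (b : ℕ) : Fin b × Bool → ℚ[X] := fun p =>
  if p.2 then (1 + X) ^ (p.1 : ℕ) else ((p.1 : ℚ[X]) + 1) * X * (1 + X) ^ (p.1 : ℕ)

theorem calAStrict_mulVec_strictResolvent (b : ℕ) (i : Fin b) (R : Bool) :
    ((calAStrict b).map C *ᵥ strictResolvent b) (i, R) =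
      if R then ∑ k ∈ range i, (1 + X) ^ k
      else ∑ k ∈ range (i + 1), (1 + X) ^ k +
        ∑ k ∈ range i, ((k : ℚ[X]) + 1) * X * (1 + X) ^ k := by
  cases R <;>
    simp only [mulVec, dotProduct, map_apply, Fintype.sum_prod_type, Fintype.sum_bool, calAStrict,
      strictResolvent, ↓reduceIte, Bool.false_eq_true, MonoidWithZeroHom.map_ite_one_zero, ite_mul,
      one_mul, zero_mul, map_zero, add_zero]
  · rw [sum_add_distrib, Fin.sum_ite_le,
      Fin.sum_ite_lt i (fun k => ((k : ℚ[X]) + 1) * X * (1 + X) ^ k)]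
  · exact Fin.sum_ite_lt i _

theorem one_sub_X_smul_calAStrict_mulVec_strictResolvent (b : ℕ) :
    (1 - (X : ℚ[X]) • (calAStrict b).map C) *ᵥ strictResolvent b = indicatorP b := by
  have geom (i : ℕ) : X * ∑ k ∈ range i, (1 + X : ℚ[X]) ^ k = (1 + X) ^ i - 1 := by
    rw [mul_comm, ← geom_sum_mul]
    ring
  funext ⟨i, R⟩
  rw [sub_mulVec, one_mulVec, smul_mulVec, Pi.sub_apply, Pi.smul_apply, smul_eq_mul,
    calAStrict_mulVec_strictResolvent]
  cases R
  · simp only [strictResolvent, indicatorP, Bool.false_eq_true, ↓reduceIte]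
    rw [mul_add, geom, mul_sum_range_cast_add_one_mul_mul_one_add_pow]
    ring
  · simp only [strictResolvent, indicatorP, ↓reduceIte]
    rw [geom]
    ring

theorem charpolyRev_calA (b : ℕ) :
    (calA b).charpolyRev = (1 - C (b : ℚ) * X) * (1 + X : ℚ[X]) ^ b := by
  have hz : (1 - (X : ℚ[X]) • (calAStrict b).map C) *ᵥ ((X : ℚ[X]) • strictResolvent b) =
      (X : ℚ[X]) • indicatorP b := by
    rw [mulVec_smul, one_sub_X_smul_calAStrict_mulVec_strictResolvent]
  have hdot : indicatorN b ⬝ᵥ ((X : ℚ[X]) • strictResolvent b) =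
      X * ∑ k ∈ range b, ((k : ℚ[X]) + 1) * X * (1 + X) ^ k := by
    simp only [dotProduct, Fintype.sum_prod_type, Fintype.sum_bool, indicatorN, Pi.smul_apply,
      strictResolvent, smul_eq_mul, ↓reduceIte, Bool.false_eq_true, zero_mul, one_mul, zero_add,
      mul_sum]
    exact Fin.sum_univ_eq_sum_range (fun k => X * (((k : ℚ[X]) + 1) * X * (1 + X) ^ k)) b
  rw [charpolyRev, map_calA_eq_add_vecMulVec, smul_add, ← smul_vecMulVec, ← sub_sub,
    det_sub_vecMulVec_of_mulVec_eq hz, det_one_sub_X_smul_calAStrict, one_mul, hdot,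
    mul_sum_range_cast_add_one_mul_mul_one_add_pow, map_natCast]
  ring

/-- The characteristic polynomial of `𝒜` is `X^{b−1}·(X − b)·(X + 1)^b`. -/
theorem calA_charpoly (b : ℕ) (hb : 2 ≤ b) :
    (calA b).charpoly =
      Polynomial.X ^ (b - 1) * (Polynomial.X - Polynomial.C (b : ℚ)) *
        (Polynomial.X + 1) ^ b := by
  rw [charpoly_eq_reflect_charpolyRev, charpolyRev_calA, Fintype.card_prod, Fintype.card_fin,
    Fintype.card_bool, show b * 2 = b - 1 + 1 + b by omega,
    reflect_one_sub_C_mul_X_mul_one_add_X_pow]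
end

section
/- Fix an integer b ≥ 2 and let 𝒜 be the 2b × 2b matrix over ℚ with rows and columns indexed by pairs (i,R), i ∈ {0, …, b−1}, R ∈ {P,N}, whose entry 𝒜_{(i,R),(j,S)} equals 1 if (i = j and R ≠ S), or (i > j), or (i < j and R = P and S = N), and equals 0 otherwise. Let ζ = (b+1)/b and let e be the vector with coordinates e_{(i,P)} = b·ζ^i and e_{(i,N)} = (i+1)·ζ^i for i = 0, …, b−1. Then 𝒜 · e = b · e, i.e. e is an eigenvector of 𝒜 with eigenvalue b. -/
open Finset

section FinSum

variable {M : Type*} [AddCommMonoid M] {n : ℕ} (f : ℕ → M) (i : Fin n)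

theorem Fin.sum_Iio_eq_sum_range :
    ∑ j ∈ Iio i, f j = ∑ j ∈ range i, f j := by
  rw [← Nat.Iio_eq_range, ← Fin.map_valEmbedding_Iio, sum_map]
  rfl

theorem Fin.sum_Iic_eq_sum_range :
    ∑ j ∈ Iic i, f j = ∑ j ∈ range (i + 1), f j := by
  rw [Nat.range_succ_eq_Iic, ← Fin.map_valEmbedding_Iic, sum_map]
  rfl

end FinSum

section GeomSum

variable {R : Type*} [CommRing R] {B ζ : R}

theorem geom_sum_eq_of_mul_eq_add_one (h : B * ζ = B + 1) (k : ℕ) :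
    ∑ j ∈ range k, ζ ^ j = B * (ζ ^ k - 1) := by
  induction k with
  | zero => simp
  | succ k ih =>
    rw [sum_range_succ, ih, pow_succ]
    linear_combination -ζ ^ k * h

theorem sum_range_succ_mul_pow_eq_of_mul_eq_add_one (h : B * ζ = B + 1) (k : ℕ) :
    ∑ j ∈ range k, ((j : R) + 1) * ζ ^ j = (B * k - B ^ 2) * ζ ^ k + B ^ 2 := by
  induction k with
  | zero => simp
  | succ k ih =>
    rw [sum_range_succ, ih, pow_succ]
    push_cast
    linear_combination (B - k - 1) * ζ ^ k * h

end GeomSum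

namespace calA

variable {b : ℕ} (i j : Fin b)

theorem apply_true_true : calA b (i, true) (j, true) = if j < i then 1 else 0 := by
  simp [calA]

theorem apply_true_false : calA b (i, true) (j, false) = 1 := by
  simp [calA]; omega

theorem apply_false_true : calA b (i, false) (j, true) = if j ≤ i then 1 else 0 := by
  simp [calA, le_iff_eq_or_lt, eq_comm]

theorem apply_false_false : calA b (i, false) (j, false) = if j < i then 1 else 0 := by
  simp [calA]

theorem mulVec_apply_true (v : Fin b × Bool → ℚ) :
    ((calA b).mulVec v) (i, true) = ∑ j ∈ Iio i, v (j, true) + ∑ j, v (j, false) := by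
  simp only [Matrix.mulVec, dotProduct, Fintype.sum_prod_type, Fintype.sum_bool,
    apply_true_true, apply_true_false, ite_mul, one_mul, zero_mul]
  rw [sum_add_distrib, ← sum_filter, filter_gt_eq_Iio]

theorem mulVec_apply_false (v : Fin b × Bool → ℚ) :
    ((calA b).mulVec v) (i, false) =
      ∑ j ∈ Iic i, v (j, true) + ∑ j ∈ Iio i, v (j, false) := by
  simp only [Matrix.mulVec, dotProduct, Fintype.sum_prod_type, Fintype.sum_bool,
    apply_false_true, apply_false_false, ite_mul, one_mul, zero_mul]
  rw [sum_add_distrib, ← sum_filter, ← sum_filter, filter_ge_eq_Iic, filter_gt_eq_Iio]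

end calA

theorem calA_eigenvector_general (b : ℕ) (ζ : ℚ)
    (hζ : ζ = ((b : ℚ) + 1) / (b : ℚ))
    (e : Fin b × Bool → ℚ)
    (heP : ∀ i : Fin b, e (i, true) = (b : ℚ) * ζ ^ (i : ℕ))
    (heN : ∀ i : Fin b, e (i, false) = ((i : ℕ) + 1 : ℚ) * ζ ^ (i : ℕ)) :
    (calA b).mulVec e = (b : ℚ) • e := by
  funext ⟨i, R⟩
  have hbζ : (b : ℚ) * ζ = b + 1 := by
    have : (b : ℚ) ≠ 0 := Nat.cast_ne_zero.mpr i.pos.ne'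
    rw [hζ]; field_simp
  cases R with
  | true =>
    rw [calA.mulVec_apply_true, Pi.smul_apply, smul_eq_mul]
    simp only [heP, heN]
    rw [Fin.sum_Iio_eq_sum_range (fun n => (b : ℚ) * ζ ^ n),
      Fin.sum_univ_eq_sum_range (fun n => ((n : ℚ) + 1) * ζ ^ n), ← mul_sum,
      geom_sum_eq_of_mul_eq_add_one hbζ, sum_range_succ_mul_pow_eq_of_mul_eq_add_one hbζ]
    ring
  | false =>
    rw [calA.mulVec_apply_false, Pi.smul_apply, smul_eq_mul]
    simp only [heP, heN]
    rw [Fin.sum_Iic_eq_sum_range (fun n => (b : ℚ) * ζ ^ n),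
      Fin.sum_Iio_eq_sum_range (fun n => ((n : ℚ) + 1) * ζ ^ n), ← mul_sum,
      geom_sum_eq_of_mul_eq_add_one hbζ, sum_range_succ_mul_pow_eq_of_mul_eq_add_one hbζ,
      pow_succ]
    linear_combination (b : ℚ) * ζ ^ (i : ℕ) * hbζ

/-- With `ζ = (b+1)/b`, the vector `e` given by `e_(i,P) = b·ζ^i` and
`e_(i,N) = (i+1)·ζ^i` is an eigenvector of `𝒜` with eigenvalue `b`. -/
theorem calA_eigenvector (b : ℕ) (hb : 2 ≤ b) (ζ : ℚ)
    (hζ : ζ = ((b : ℚ) + 1) / (b : ℚ))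
    (e : Fin b × Bool → ℚ)
    (heP : ∀ i : Fin b, e (i, true) = (b : ℚ) * ζ ^ (i : ℕ))
    (heN : ∀ i : Fin b, e (i, false) = ((i : ℕ) + 1 : ℚ) * ζ ^ (i : ℕ)) :
    (calA b).mulVec e = (b : ℚ) • e :=
  calA_eigenvector_general b ζ hζ e heP heN
end

section
/- Fix an integer b ≥ 2 and let 𝒜 be the 2b × 2b matrix over ℚ with rows and columns indexed by pairs (i,R), i ∈ {0, …, b−1}, R ∈ {P,N}, whose entry 𝒜_{(i,R),(j,S)} equals 1 if (i = j and R ≠ S), or (i > j), or (i < j and R = P and S = N), and equals 0 otherwise. For 1 ≤ i ≤ b−1 define the vector f_i by f_i(b−i−1, N) = −i, f_i(j, R) = 1 for every j with b−i ≤ j ≤ b−1 and every R ∈ {P,N}, and f_i(j,R) = 0 otherwise. Then 𝒜 · f_1 = 0, and for every i with 2 ≤ i ≤ b−1 one has 𝒜 · f_i = f_1 + f_2 + ⋯ + f_{i−1}. -/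
/-!
Extend the family by `f₀ = 0`, which is what the defining formula gives at `i = 0`. With
`c = b - i - 1`, consecutive vectors differ by `(i + 1) (e_{(c,N)} - e_{(c-1,N)}) + e_{(c,P)}`.
Column `(c, N)` of `𝒜` is `1` on all `P`-rows and on the rows `(j, N)` with `j > c`, so the
difference of columns `(c, N)` and `(c - 1, N)` is `-e_{(c,N)}`; column `(c, P)` is `e_{(c,N)}`
plus the indicator `𝟙_{j > c}`. Hence `𝒜 (f_{i+1} - f_i) = -i e_{(c,N)} + 𝟙_{j > c} = f_i`,
and the claim follows by telescoping.
-/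

open Finset Matrix

section

variable {b : ℕ}

theorem calA_col_false (c : Fin b) :
    (calA b).col (c, false) = fun p => if p.2 = true ∨ c < p.1 then 1 else 0 := by
  funext ⟨x, R⟩
  cases R <;> simp [calA, ne_comm]

theorem calA_col_true (c : Fin b) :
    (calA b).col (c, true) = fun p => if (p.1 = c ∧ p.2 = false) ∨ c < p.1 then 1 else 0 := by
  funext ⟨x, R⟩
  cases R <;> simp [calA]

variable (b) in
def calAChainVec (i : ℕ) : Fin b × Bool → ℚ := fun p =>
  if (p.1 : ℕ) = b - i - 1 ∧ p.2 = false then -(i : ℚ)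
    else if b - i ≤ (p.1 : ℕ) then 1 else 0

theorem calAChainVec_zero : calAChainVec b 0 = 0 := by
  funext ⟨x, R⟩
  simp [calAChainVec, x.isLt]

theorem calAChainVec_succ_sub {i : ℕ} (hi : i + 2 ≤ b) :
    calAChainVec b (i + 1) - calAChainVec b i =
      ((i : ℚ) + 1) • (Pi.single (⟨b - i - 1, by omega⟩, false) 1
          - Pi.single (⟨b - i - 2, by omega⟩, false) 1)
        + Pi.single (⟨b - i - 1, by omega⟩, true) 1 := by
  funext ⟨x, R⟩
  have hx := x.isLt
  cases R <;>
    simp only [Pi.sub_apply, Pi.add_apply, Pi.smul_apply, Pi.single_apply, smul_eq_mul,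
      calAChainVec, Prod.mk.injEq, Fin.ext_iff, and_true, and_false, Bool.false_eq_true,
      Bool.true_eq_false] <;>
    split_ifs <;> push_cast <;> first | ring1 | (exfalso; omega)

theorem calA_mulVec_calAChainVec_succ_sub {i : ℕ} (hi : i + 2 ≤ b) :
    calA b *ᵥ (calAChainVec b (i + 1) - calAChainVec b i) = calAChainVec b i := by
  rw [calAChainVec_succ_sub hi, mulVec_add, mulVec_smul, mulVec_sub, mulVec_single_one,
    mulVec_single_one, mulVec_single_one, calA_col_false, calA_col_false, calA_col_true]
  funext ⟨x, R⟩
  have hx := x.isLt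
  cases R <;>
    simp only [Pi.sub_apply, Pi.add_apply, Pi.smul_apply, smul_eq_mul, calAChainVec, Fin.ext_iff,
      Fin.lt_def, and_true, and_false, true_or, false_or, Bool.false_eq_true,
      Bool.true_eq_false] <;>
    split_ifs <;> first | ring1 | (exfalso; omega)

theorem calA_mulVec_calAChainVec {i : ℕ} (hi : i ≤ b - 1) :
    calA b *ᵥ calAChainVec b i = ∑ k ∈ range i, calAChainVec b k := by
  induction i with
  | zero => simp [calAChainVec_zero]
  | succ i ih =>
    calc calA b *ᵥ calAChainVec b (i + 1)
        = calA b *ᵥ (calAChainVec b (i + 1) - calAChainVec b i)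
            + calA b *ᵥ calAChainVec b i := by
          rw [← mulVec_add, sub_add_cancel]
      _ = ∑ k ∈ range (i + 1), calAChainVec b k := by
          rw [calA_mulVec_calAChainVec_succ_sub (by omega), ih (by omega), sum_range_succ,
            add_comm]

end

/-- For `1 ≤ i ≤ b−1`, let `f_i` have coordinate `−i` at `(b−i−1, N)`,
coordinate `1` at `(j, R)` for `b−i ≤ j ≤ b−1` and both `R`, and `0` elsewhere.
Then `𝒜·f_1 = 0` and `𝒜·f_i = f_1 + f_2 + ⋯ + f_{i−1}` for `2 ≤ i ≤ b−1`. -/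
theorem calA_kernel_vectors (b : ℕ) (hb : 2 ≤ b)
    (f : ℕ → Fin b × Bool → ℚ)
    (hf : ∀ i, 1 ≤ i → i ≤ b - 1 → ∀ p : Fin b × Bool,
      f i p = if (p.1 : ℕ) = b - i - 1 ∧ p.2 = false then -(i : ℚ)
        else if b - i ≤ (p.1 : ℕ) then 1 else 0) :
    (calA b).mulVec (f 1) = 0 ∧
      ∀ i, 2 ≤ i → i ≤ b - 1 →
        (calA b).mulVec (f i) = ∑ k ∈ Finset.Icc 1 (i - 1), f k := by
  have hf' : ∀ i, 1 ≤ i → i ≤ b - 1 → f i = calAChainVec b i :=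
    fun i h1 h2 => funext (hf i h1 h2)
  refine ⟨?_, fun i h2 hi => ?_⟩
  · rw [hf' 1 le_rfl (by omega), calA_mulVec_calAChainVec (by omega), sum_range_one,
      calAChainVec_zero]
  · rw [hf' i (by omega) hi, calA_mulVec_calAChainVec hi, sum_range_eq_add_Ico _ (by omega),
      calAChainVec_zero, zero_add]
    exact sum_congr rfl fun k hk => (hf' k (mem_Ico.1 hk).1 (by grind)).symm
end
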